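/- arXiv:2510.12626 — 3 statements merged into one kernel-verified Lean document; each statement's English description precedes it below -/
import Mathlib

section
/- For every function P : X → {1,…,ℓ} such that ζ^P_∅ ≠ 0, the fidelity deficit of the collision-free part satisfies 1 − |⟨φ^P, φ^P_0⟩|² ≤ Σ_{1 ≤ γ < β ≤ k} Σ_{x⃗ ∈ X^k with P(x_γ) = P(x_β)} w(x⃗). -/
/-!
The overlap `⟨φ, ζ⟩` equals `‖ζ‖²` because `ζ` is `φ` restricted to the collision-free tuples,
so `1 - |⟨φ, ζ / ‖ζ‖⟩|² = ‖φ‖² - ‖ζ‖²` is the mass of `φ` on tuples with a collision. Since `φ`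
is a product of normalised states, summing out the `Y`-coordinates turns this mass into the
`w`-weight of the colliding `x⃗`, and a union bound over the colliding pair `γ < β` finishes.
-/

open Finset Function

lemma normSq_sum_conj_mul_div_sqrt {ι : Type*} [Fintype ι] (φ ζ : ι → ℂ)
    (h : ∀ z, starRingEnd ℂ (φ z) * ζ z = Complex.normSq (ζ z)) :
    Complex.normSq (∑ z, starRingEnd ℂ (φ z) *
        (ζ z / ((Real.sqrt (∑ z', Complex.normSq (ζ z')) : ℝ) : ℂ)))
      = ∑ z, Complex.normSq (ζ z) := by
  set S := ∑ z', Complex.normSq (ζ z')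
  have hS : 0 ≤ S := sum_nonneg fun z _ => Complex.normSq_nonneg _
  have hsum : ∑ z, starRingEnd ℂ (φ z) * (ζ z / ((Real.sqrt S : ℝ) : ℂ))
      = ((Real.sqrt S : ℝ) : ℂ) := by
    simp_rw [mul_div_assoc', h]
    rw [← sum_div, ← Complex.ofReal_sum, ← Complex.ofReal_div, Real.div_sqrt]
  rw [hsum, Complex.normSq_ofReal, Real.mul_self_sqrt hS]

lemma sum_ite_fst_prod {ι X Y R : Type*} [Fintype ι] [DecidableEq ι] [Fintype X] [Fintype Y]
    [CommSemiring R] (c : (ι → X) → Prop) [DecidablePred c] (F : ι → X × Y → R) :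
    ∑ z : ι → X × Y, (if c (fun i => (z i).1) then ∏ i, F i (z i) else 0)
      = ∑ v : ι → X, if c v then ∏ i, ∑ y, F i (v i, y) else 0 := by
  rw [← (Equiv.arrowProdEquivProdArrow ι (fun _ => X) (fun _ => Y)).symm.sum_comp,
    Fintype.sum_prod_type]
  refine sum_congr rfl fun v _ => ?_
  have hpair : ∀ y, (Equiv.arrowProdEquivProdArrow ι (fun _ => X) (fun _ => Y)).symm (v, y)
      = fun i => (v i, y i) := fun _ => rfl
  simp only [hpair]
  split_ifs with hv
  · exact (Fintype.prod_sum fun i y => F i (v i, y)).symm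
  · exact sum_const_zero

lemma ite_injective_le_sum_collisions {ι β : Type*} [Fintype ι] [LinearOrder ι]
    [DecidableEq β] (u : ι → β) [Decidable (Injective u)] {a : ℝ} (ha : 0 ≤ a) :
    (if Injective u then 0 else a)
      ≤ ∑ p ∈ univ.filter (fun p : ι × ι => p.1 < p.2), if u p.1 = u p.2 then a else 0 := by
  have hterm_nonneg : ∀ p : ι × ι, 0 ≤ if u p.1 = u p.2 then a else 0 := fun p => by
    split_ifs <;> simp [ha]
  split_ifs with hu
  · exact sum_nonneg fun p _ => hterm_nonneg p
  obtain ⟨i, j, hij, hne⟩ := not_injective_iff.mp hu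
  obtain ⟨p, hp, hpu⟩ : ∃ p : ι × ι, p.1 < p.2 ∧ u p.1 = u p.2 := by
    rcases hne.lt_or_gt with h | h
    exacts [⟨(i, j), h, hij⟩, ⟨(j, i), h, hij.symm⟩]
  calc a = if u p.1 = u p.2 then a else 0 := (if_pos hpu).symm
    _ ≤ _ := single_le_sum (fun p _ => hterm_nonneg p) (by simpa using hp)

theorem stmt3_general {X Y : Type} [Fintype X] [Fintype Y]
    (k l : ℕ)
    (ψ : Fin l → Y → ℂ) (hψ : ∀ i, ∑ y, Complex.normSq (ψ i y) = 1)
    (α : Fin k → X → ℂ) (hα : ∀ i, ∑ x, Complex.normSq (α i x) = 1)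
    (w : (Fin k → X) → ℝ) (hw : ∀ v, w v = ∏ j, Complex.normSq (α j (v j)))
    (P : X → Fin l)
    (φ : (Fin k → X × Y) → ℂ)
    (hφ : ∀ z, φ z = ∏ j, α j (z j).1 * ψ (P (z j).1) (z j).2)
    (ζ : (Fin k → X × Y) → ℂ)
    (hζ : ∀ z, ζ z = if Function.Injective (fun j => P ((z j).1)) then φ z else 0) :
    1 - Complex.normSq (∑ z, (starRingEnd ℂ) (φ z) *
          (ζ z / ((Real.sqrt (∑ z', Complex.normSq (ζ z')) : ℝ) : ℂ)))
    ≤ ∑ p ∈ Finset.univ.filter (fun p : Fin k × Fin k => p.1 < p.2),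
        ∑ v ∈ Finset.univ.filter (fun v : Fin k → X => P (v p.1) = P (v p.2)), w v := by
  classical
  have hoverlap : ∀ z, starRingEnd ℂ (φ z) * ζ z = Complex.normSq (ζ z) := fun z => by
    rw [hζ]; split_ifs
    exacts [by rw [mul_comm, Complex.mul_conj], by simp]
  have hweight : ∀ v : Fin k → X,
      ∏ j, ∑ y, Complex.normSq (α j (v j) * ψ (P (v j)) y) = w v := fun v => by
    simp_rw [hw, Complex.normSq_mul, ← mul_sum, hψ, mul_one]
  have hcollision_free : ∑ z, Complex.normSq (ζ z)
      = ∑ v : Fin k → X, if Injective (fun j => P (v j)) then w v else 0 := by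
    simp_rw [hζ, apply_ite Complex.normSq, map_zero, hφ, map_prod, ← hweight]
    exact sum_ite_fst_prod (fun v => Injective fun j => P (v j))
      fun j z => Complex.normSq (α j z.1 * ψ (P z.1) z.2)
  have htotal : ∑ v, w v = 1 := by
    rw [sum_congr rfl fun v _ => hw v,
      ← Fintype.prod_sum fun j x => Complex.normSq (α j x)]
    simp only [hα, prod_const_one]
  rw [normSq_sum_conj_mul_div_sqrt φ ζ hoverlap, hcollision_free]
  calc 1 - ∑ v : Fin k → X, (if Injective (fun j => P (v j)) then w v else 0)
      = ∑ v : Fin k → X, if Injective (fun j => P (v j)) then 0 else w v := by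
        rw [← htotal, ← sum_sub_distrib]
        exact sum_congr rfl fun v _ => by split_ifs <;> ring
    _ ≤ ∑ v : Fin k → X, ∑ p ∈ univ.filter (fun p : Fin k × Fin k => p.1 < p.2),
          if P (v p.1) = P (v p.2) then w v else 0 :=
        sum_le_sum fun v _ => ite_injective_le_sum_collisions _
          (by rw [hw]; exact prod_nonneg fun j _ => Complex.normSq_nonneg _)
    _ = _ := by rw [sum_comm]; simp_rw [sum_filter]

/-- For every `P : X → Fin l` with `ζ^P_∅ ≠ 0`, the fidelity deficit of the
collision-free part satisfies
`1 − |⟨φ^P, φ^P_0⟩|² ≤ Σ_{γ<β} Σ_{x⃗ : P(x_γ)=P(x_β)} w(x⃗)`. -/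
theorem stmt3 {X Y : Type} [Fintype X] [Fintype Y] [Nonempty X] [Nonempty Y]
    (k l : ℕ) (hk : 1 ≤ k) (hl : 1 ≤ l)
    (ψ : Fin l → Y → ℂ) (hψ : ∀ i, ∑ y, Complex.normSq (ψ i y) = 1)
    (α : Fin k → X → ℂ) (hα : ∀ i, ∑ x, Complex.normSq (α i x) = 1)
    (w : (Fin k → X) → ℝ) (hw : ∀ v, w v = ∏ j, Complex.normSq (α j (v j)))
    (P : X → Fin l)
    (φ : (Fin k → X × Y) → ℂ)
    (hφ : ∀ z, φ z = ∏ j, α j (z j).1 * ψ (P (z j).1) (z j).2)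
    (ζ : (Fin k → X × Y) → ℂ)
    (hζ : ∀ z, ζ z = if Function.Injective (fun j => P ((z j).1)) then φ z else 0)
    (hζne : ζ ≠ 0) :
    1 - Complex.normSq (∑ z, (starRingEnd ℂ) (φ z) *
          (ζ z / ((Real.sqrt (∑ z', Complex.normSq (ζ z')) : ℝ) : ℂ)))
    ≤ ∑ p ∈ Finset.univ.filter (fun p : Fin k × Fin k => p.1 < p.2),
        ∑ v ∈ Finset.univ.filter (fun v : Fin k → X => P (v p.1) = P (v p.2)), w v :=
  stmt3_general k l ψ hψ α hα w hw P φ hφ ζ hζ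
end

section
/- Suppose additionally that |α^{(i)}(x)|² ≤ ε for every i ∈ {1,…,k} and every x ∈ X. If P is drawn uniformly at random from the set of all functions X → {1,…,ℓ}, then E_P[ sqrt( Σ_{x⃗ ∈ X^k such that P(x_1),…,P(x_k) are NOT pairwise distinct} w(x⃗) ) ] ≤ sqrt( (k(k−1)/2)·(ε + 1/ℓ) ). (For each P with ζ^P_∅ ≠ 0, the quantity under the square root equals 1 − |⟨φ^P, φ^P_0⟩|², so the left-hand side is the average trace distance between the pure states φ^P and φ^P_0.) -/
open Finset

lemma aux_cs {ι : Type} [Fintype ι] (f : ι → ℝ) (hf : ∀ i, 0 ≤ f i) :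
    ∑ i, Real.sqrt (f i) ≤ Real.sqrt (∑ i, f i) * Real.sqrt (Fintype.card ι : ℝ) := by
  have h := Real.sum_sqrt_mul_sqrt_le (Finset.univ : Finset ι) (f := f)
    (g := fun _ => (1:ℝ)) hf (fun _ => zero_le_one)
  simpa [Finset.card_univ] using h

lemma aux_final {ι : Type} [Fintype ι] [Nonempty ι] (f : ι → ℝ) (hf : ∀ i, 0 ≤ f i)
    (B : ℝ) (hkey : (∑ i, f i) ≤ (Fintype.card ι : ℝ) * B) :
    (∑ i, Real.sqrt (f i)) / (Fintype.card ι : ℝ) ≤ Real.sqrt B := by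
  set N : ℝ := (Fintype.card ι : ℝ) with hN
  have hNpos : 0 < N := by rw [hN]; exact_mod_cast Fintype.card_pos
  have hsum0 : 0 ≤ ∑ i, f i := Finset.sum_nonneg fun i _ => hf i
  have hB0 : 0 ≤ B := by nlinarith
  rw [div_le_iff₀ hNpos]
  calc ∑ i, Real.sqrt (f i) ≤ Real.sqrt (∑ i, f i) * Real.sqrt N := aux_cs f hf
    _ ≤ Real.sqrt (N * B) * Real.sqrt N := by
        gcongr
    _ = (Real.sqrt N * Real.sqrt N) * Real.sqrt B := by
        rw [Real.sqrt_mul (le_of_lt hNpos)]; ring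
    _ = Real.sqrt B * N := by rw [Real.mul_self_sqrt (le_of_lt hNpos)]; ring


lemma aux_count {X : Type} [Fintype X] [DecidableEq X] {l : ℕ} (hl : 1 ≤ l) {a b : X} (hab : a ≠ b) :
    ((Finset.univ.filter (fun P : X → Fin l => P a = P b)).card : ℝ) * l
      = (Fintype.card (X → Fin l) : ℝ) := by
  have e : {P : X → Fin l // P a = P b} ≃ ({x : X // x ≠ a} → Fin l) :=
    { toFun := fun P x => P.1 x.1
      invFun := fun Q => ⟨fun x => if h : x = a then Q ⟨b, Ne.symm hab⟩ else Q ⟨x, h⟩, by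
        simp [Ne.symm hab]⟩
      left_inv := fun P => by
        apply Subtype.ext
        funext x
        by_cases h : x = a
        · subst h
          simp only [dif_pos rfl]
          exact P.2.symm
        · simp [h]
      right_inv := fun Q => by
        funext x
        simp [x.2] }
  have h1 : (Finset.univ.filter (fun P : X → Fin l => P a = P b)).card
      = l ^ (Fintype.card X - 1) := by
    rw [← Fintype.card_subtype, Fintype.card_congr e, Fintype.card_fun, Fintype.card_fin]
    congr 1
    rw [Fintype.card_subtype_compl, Fintype.card_subtype_eq]
  have hX : 1 ≤ Fintype.card X := Fintype.card_pos_iff.mpr ⟨a⟩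
  have h2 : Fintype.card (X → Fin l) = l ^ Fintype.card X := by
    rw [Fintype.card_fun, Fintype.card_fin]
  have h3 : l ^ (Fintype.card X - 1) * l = l ^ Fintype.card X := by
    have h4 : Fintype.card X - 1 + 1 = Fintype.card X := Nat.succ_pred_eq_of_pos hX
    rw [← pow_succ, h4]
  rw [h1, h2]
  exact_mod_cast h3

lemma aux_delta {l : ℕ} (u t : Fin l) :
    (∑ c : Fin l, (if u = c then (1:ℝ) else 0) * (if t = c then 1 else 0))
      = if u = t then 1 else 0 := by
  by_cases h : u = t
  · subst h
    simp
  · rw [if_neg h]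
    apply Finset.sum_eq_zero
    intro c _
    by_cases h1 : u = c
    · subst h1
      simp [Ne.symm h]
    · simp [h1]

/-- Assume additionally `|α^{(i)}(x)|² ≤ ε` for all `i, x`. Over a uniformly
random `P : X → Fin l`,
`E_P[ sqrt( Σ_{x⃗ : P(x_1),…,P(x_k) not pairwise distinct} w(x⃗) ) ]
  ≤ sqrt( (k(k−1)/2)·(ε + 1/l) )`. -/
theorem stmt5 {X Y : Type} [Fintype X] [DecidableEq X] [Fintype Y] [Nonempty X] [Nonempty Y]
    (k l : ℕ) (hk : 1 ≤ k) (hl : 1 ≤ l) (ε : ℝ) (hε : 0 ≤ ε)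
    (ψ : Fin l → Y → ℂ) (hψ : ∀ i, ∑ y, Complex.normSq (ψ i y) = 1)
    (α : Fin k → X → ℂ) (hα : ∀ i, ∑ x, Complex.normSq (α i x) = 1)
    (hαε : ∀ i x, Complex.normSq (α i x) ≤ ε)
    (w : (Fin k → X) → ℝ) (hw : ∀ v, w v = ∏ j, Complex.normSq (α j (v j))) :
    (∑ P : X → Fin l, Real.sqrt (∑ v ∈ Finset.univ.filter
        (fun v : Fin k → X => ¬ Function.Injective (fun j => P (v j))), w v))
      / (Fintype.card (X → Fin l) : ℝ)
    ≤ Real.sqrt (((k : ℝ) * ((k : ℝ) - 1) / 2) * (ε + 1 / l)) := by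
  classical
  set N : ℝ := (Fintype.card (X → Fin l) : ℝ) with hNdef
  haveI : Nonempty (X → Fin l) := ⟨fun _ => ⟨0, hl⟩⟩
  have hNpos : 0 < N := by rw [hNdef]; exact_mod_cast Fintype.card_pos
  have hlR : (0:ℝ) < l := by exact_mod_cast hl
  have hw0 : ∀ v, 0 ≤ w v := fun v => by
    rw [hw]; exact Finset.prod_nonneg fun j _ => Complex.normSq_nonneg _
  set B : ℝ := ((k : ℝ) * ((k : ℝ) - 1) / 2) * (ε + 1 / l) with hBdef
  set s : Finset (Fin k × Fin k) := Finset.univ.filter (fun p => p.2 < p.1) with hsdef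
  -- Step 1 : pointwise union bound over pairs
  have step1 : ∀ P : X → Fin l,
      (∑ v ∈ Finset.univ.filter
        (fun v : Fin k → X => ¬ Function.Injective (fun j => P (v j))), w v)
      ≤ ∑ p ∈ s, ∑ v : Fin k → X, (if P (v p.1) = P (v p.2) then w v else 0) := by
    intro P
    rw [Finset.sum_filter]
    rw [← Finset.sum_comm]
    apply Finset.sum_le_sum
    intro v _
    have hnn : ∀ p ∈ s, (0:ℝ) ≤ if P (v p.1) = P (v p.2) then w v else 0 := by
      intro p _
      by_cases h : P (v p.1) = P (v p.2) <;> simp [h, hw0 v]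
    by_cases hbad : Function.Injective (fun j => P (v j))
    · rw [if_neg (not_not_intro hbad)]
      exact Finset.sum_nonneg hnn
    · rw [if_pos hbad]
      rw [Function.not_injective_iff] at hbad
      obtain ⟨i, j, hEq, hne⟩ := hbad
      rcases hne.lt_or_gt with hlt | hlt
      · have hmem : (j, i) ∈ s := by simp [hsdef, hlt]
        have h := Finset.single_le_sum hnn hmem
        simpa [hEq.symm] using h
      · have hmem : (i, j) ∈ s := by simp [hsdef, hlt]
        have h := Finset.single_le_sum hnn hmem
        simpa [hEq] using h
  -- Step 2 : bound the P-average for a fixed pair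
  have step2 : ∀ p ∈ s,
      (∑ P : X → Fin l, ∑ v : Fin k → X, (if P (v p.1) = P (v p.2) then w v else 0))
        ≤ N * (ε + 1 / l) := by
    rintro ⟨i, j⟩ hp
    have hlt : j < i := by simpa [hsdef] using hp
    have hij : i ≠ j := ne_of_gt hlt
    have hji : j ≠ i := ne_of_lt hlt
    simp only []
    -- (a) rewrite the inner sum
    have ha : ∀ P : X → Fin l,
        (∑ v : Fin k → X, if P (v i) = P (v j) then w v else 0)
          = ∑ a : X, ∑ b : X, (if P a = P b then (1:ℝ) else 0)
              * (Complex.normSq (α i a) * Complex.normSq (α j b)) := by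
      intro P
      have h1 : ∀ v : Fin k → X, (if P (v i) = P (v j) then w v else 0)
          = ∑ c : Fin l, ∏ m : Fin k,
              ((if m = i then (if P (v m) = c then (1:ℝ) else 0)
                else if m = j then (if P (v m) = c then 1 else 0) else 1)
                * Complex.normSq (α m (v m))) := by
        intro v
        have hq : ∀ c : Fin l,
            (∏ m : Fin k,
              ((if m = i then (if P (v m) = c then (1:ℝ) else 0)
                else if m = j then (if P (v m) = c then 1 else 0) else 1)
                * Complex.normSq (α m (v m))))
            = ((if P (v i) = c then (1:ℝ) else 0) * (if P (v j) = c then 1 else 0)) * w v := by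
          intro c
          rw [Finset.prod_mul_distrib]
          congr 1
          · have hsub : ({i, j} : Finset (Fin k)) ⊆ Finset.univ := Finset.subset_univ _
            have hone : ∀ m ∈ (Finset.univ : Finset (Fin k)), m ∉ ({i, j} : Finset (Fin k)) →
                (if m = i then (if P (v m) = c then (1:ℝ) else 0)
                  else if m = j then (if P (v m) = c then 1 else 0) else 1) = 1 := by
              intro m _ hm
              simp only [Finset.mem_insert, Finset.mem_singleton, not_or] at hm
              rw [if_neg hm.1, if_neg hm.2]
            rw [← Finset.prod_subset hsub hone, Finset.prod_pair hij]
            rw [if_pos rfl, if_neg hji, if_pos rfl]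
          · rw [hw]
        rw [Finset.sum_congr rfl fun c _ => hq c, ← Finset.sum_mul,
          aux_delta (P (v i)) (P (v j))]
        by_cases h : P (v i) = P (v j) <;> simp [h]
      rw [Finset.sum_congr rfl fun v _ => h1 v, Finset.sum_comm]
      have h2 : ∀ c : Fin l,
          (∑ v : Fin k → X, ∏ m : Fin k,
            ((if m = i then (if P (v m) = c then (1:ℝ) else 0)
              else if m = j then (if P (v m) = c then 1 else 0) else 1)
              * Complex.normSq (α m (v m))))
          = (∑ a : X, (if P a = c then (1:ℝ) else 0) * Complex.normSq (α i a))
            * (∑ b : X, (if P b = c then (1:ℝ) else 0) * Complex.normSq (α j b)) := by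
        intro c
        rw [← Fintype.prod_sum (fun m x =>
          ((if m = i then (if P x = c then (1:ℝ) else 0)
            else if m = j then (if P x = c then 1 else 0) else 1)
            * Complex.normSq (α m x)))]
        have hsub : ({i, j} : Finset (Fin k)) ⊆ Finset.univ := Finset.subset_univ _
        have hone : ∀ m ∈ (Finset.univ : Finset (Fin k)), m ∉ ({i, j} : Finset (Fin k)) →
            (∑ x : X, ((if m = i then (if P x = c then (1:ℝ) else 0)
              else if m = j then (if P x = c then 1 else 0) else 1)
              * Complex.normSq (α m x))) = 1 := by
          intro m _ hm
          simp only [Finset.mem_insert, Finset.mem_singleton, not_or] at hm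
          simp only [if_neg hm.1, if_neg hm.2, one_mul]
          exact hα m
        rw [← Finset.prod_subset hsub hone, Finset.prod_pair hij]
        congr 1
        · exact Finset.sum_congr rfl fun x _ => by rw [if_pos rfl]
        · exact Finset.sum_congr rfl fun x _ => by rw [if_neg hji, if_pos rfl]
      rw [Finset.sum_congr rfl fun c _ => h2 c]
      rw [Finset.sum_congr rfl fun c _ => Finset.sum_mul_sum _ _ _ _]
      rw [Finset.sum_comm]
      refine Finset.sum_congr rfl fun a _ => ?_
      rw [Finset.sum_comm]
      refine Finset.sum_congr rfl fun b _ => ?_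
      have hterm : ∀ c : Fin l,
          ((if P a = c then (1:ℝ) else 0) * Complex.normSq (α i a))
            * ((if P b = c then (1:ℝ) else 0) * Complex.normSq (α j b))
          = ((if P a = c then (1:ℝ) else 0) * (if P b = c then (1:ℝ) else 0))
            * (Complex.normSq (α i a) * Complex.normSq (α j b)) := fun c => by ring
      rw [Finset.sum_congr rfl fun c _ => hterm c, ← Finset.sum_mul, aux_delta (P a) (P b)]
    -- (b) sum over P
    have cnt : ∀ a b : X, (∑ P : X → Fin l, (if P a = P b then (1:ℝ) else 0))
        = if a = b then N else N / l := by
      intro a b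
      by_cases hab : a = b
      · subst hab
        simp [hNdef, Finset.card_univ]
      · rw [if_neg hab, Finset.sum_boole]
        rw [eq_div_iff (ne_of_gt hlR)]
        exact aux_count hl hab
    calc (∑ P : X → Fin l, ∑ v : Fin k → X, if P (v i) = P (v j) then w v else 0)
        = ∑ P : X → Fin l, ∑ a : X, ∑ b : X, (if P a = P b then (1:ℝ) else 0)
            * (Complex.normSq (α i a) * Complex.normSq (α j b)) :=
          Finset.sum_congr rfl fun P _ => ha P
      _ = ∑ a : X, ∑ b : X, (∑ P : X → Fin l, (if P a = P b then (1:ℝ) else 0))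
            * (Complex.normSq (α i a) * Complex.normSq (α j b)) := by
          rw [Finset.sum_comm]
          refine Finset.sum_congr rfl fun a _ => ?_
          rw [Finset.sum_comm]
          refine Finset.sum_congr rfl fun b _ => ?_
          rw [← Finset.sum_mul]
      _ = ∑ a : X, ∑ b : X, (if a = b then N else N / l)
            * (Complex.normSq (α i a) * Complex.normSq (α j b)) := by
          refine Finset.sum_congr rfl fun a _ => Finset.sum_congr rfl fun b _ => ?_
          rw [cnt a b]
      _ ≤ ∑ a : X, ∑ b : X,
            (N * (if a = b then Complex.normSq (α i a) * Complex.normSq (α j b) else 0)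
              + (N / l) * (Complex.normSq (α i a) * Complex.normSq (α j b))) := by
          refine Finset.sum_le_sum fun a _ => Finset.sum_le_sum fun b _ => ?_
          have hpr : 0 ≤ Complex.normSq (α i a) * Complex.normSq (α j b) :=
            mul_nonneg (Complex.normSq_nonneg _) (Complex.normSq_nonneg _)
          have hNl : 0 ≤ N / l := le_of_lt (div_pos hNpos hlR)
          by_cases hab : a = b
          · rw [if_pos hab, if_pos hab]
            nlinarith
          · rw [if_neg hab, if_neg hab]
            nlinarith [mul_nonneg (le_of_lt hNpos) hpr]
      _ = N * (∑ a : X, Complex.normSq (α i a) * Complex.normSq (α j a))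
            + (N / l) * ((∑ a : X, Complex.normSq (α i a)) * (∑ b : X, Complex.normSq (α j b))) := by
          rw [Finset.sum_congr rfl fun a _ => Finset.sum_add_distrib, Finset.sum_add_distrib]
          congr 1
          · rw [Finset.mul_sum]
            refine Finset.sum_congr rfl fun a _ => ?_
            rw [← Finset.mul_sum, Finset.sum_ite_eq]
            simp
          · rw [Finset.sum_mul_sum, Finset.mul_sum]
            refine Finset.sum_congr rfl fun a _ => ?_
            rw [Finset.mul_sum]
      _ ≤ N * ε + (N / l) * 1 := by
          have h1 : (∑ a : X, Complex.normSq (α i a) * Complex.normSq (α j a)) ≤ ε := by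
            calc (∑ a : X, Complex.normSq (α i a) * Complex.normSq (α j a))
                ≤ ∑ a : X, ε * Complex.normSq (α j a) :=
                  Finset.sum_le_sum fun a _ =>
                    mul_le_mul_of_nonneg_right (hαε i a) (Complex.normSq_nonneg _)
              _ = ε := by rw [← Finset.mul_sum, hα j, mul_one]
          have h2 : (∑ a : X, Complex.normSq (α i a)) * (∑ b : X, Complex.normSq (α j b)) = 1 := by
            rw [hα i, hα j, mul_one]
          rw [h2]
          have := mul_le_mul_of_nonneg_left h1 (le_of_lt hNpos)
          linarith
      _ = N * (ε + 1 / l) := by field_simp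
  -- card of pairs
  have hcard : 2 * s.card = k * (k - 1) := by
    have h1 : s.card = ∑ i : Fin k, (i : ℕ) := by
      rw [hsdef, Finset.card_filter, Fintype.sum_prod_type]
      refine Finset.sum_congr rfl fun i _ => ?_
      simp only [Fin.lt_def]
      rw [Fin.sum_univ_eq_sum_range (fun j => if j < (i:ℕ) then 1 else 0) k]
      have hsub : Finset.range (i:ℕ) ⊆ Finset.range k := Finset.range_subset_range.mpr (le_of_lt i.2)
      rw [← Finset.sum_subset hsub (fun x _ hx => by
        rw [if_neg (by simpa using hx)])]
      rw [Finset.sum_congr rfl fun x hx => if_pos (Finset.mem_range.mp hx)]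
      simp
    rw [h1, Fin.sum_univ_eq_sum_range (fun i => i) k, mul_comm]
    exact Finset.sum_range_id_mul_two k
  have hcardR : (s.card : ℝ) = (k:ℝ) * ((k:ℝ) - 1) / 2 := by
    have hcast : ((2 * s.card : ℕ) : ℝ) = ((k * (k-1) : ℕ) : ℝ) := by exact_mod_cast hcard
    push_cast [Nat.cast_sub hk] at hcast
    linarith
  -- key bound on the expectation of S
  have key : (∑ P : X → Fin l, ∑ v ∈ Finset.univ.filter
      (fun v : Fin k → X => ¬ Function.Injective (fun j => P (v j))), w v) ≤ N * B := by
    calc (∑ P : X → Fin l, ∑ v ∈ Finset.univ.filter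
        (fun v : Fin k → X => ¬ Function.Injective (fun j => P (v j))), w v)
        ≤ ∑ P : X → Fin l, ∑ p ∈ s, ∑ v : Fin k → X,
            (if P (v p.1) = P (v p.2) then w v else 0) :=
          Finset.sum_le_sum fun P _ => step1 P
      _ = ∑ p ∈ s, ∑ P : X → Fin l, ∑ v : Fin k → X,
            (if P (v p.1) = P (v p.2) then w v else 0) := Finset.sum_comm
      _ ≤ ∑ p ∈ s, N * (ε + 1 / l) := Finset.sum_le_sum step2
      _ = s.card * (N * (ε + 1 / l)) := by rw [Finset.sum_const, nsmul_eq_mul]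
      _ = N * B := by rw [hcardR, hBdef]; ring
  have hSnn : ∀ P : X → Fin l, 0 ≤ ∑ v ∈ Finset.univ.filter
      (fun v : Fin k → X => ¬ Function.Injective (fun j => P (v j))), w v :=
    fun P => Finset.sum_nonneg fun v _ => hw0 v
  exact aux_final (fun P : X → Fin l => ∑ v ∈ Finset.univ.filter
      (fun v : Fin k → X => ¬ Function.Injective (fun j => P (v j))), w v) hSnn B key
end

section
/- Let R be a nonempty finite set, and for each r ∈ R and each i ∈ {1,…,n} let M_r^{(i)} ∈ M_{X_i}(ℂ) be an orthogonal projection. Set P^{(i)} = (1/|R|)·Σ_{r∈R} M_r^{(i)} (a Hermitian positive semidefinite matrix with P^{(i)} ≤ I), let η ∈ [0,1], and let Π^{(i)} be the orthogonal projection onto the sum of the eigenspaces of P^{(i)} corresponding to eigenvalues strictly greater than η. Then for every unit vector ψ ∈ ℂ^{X_1×⋯×X_n}: (1/|R|)·Σ_{r∈R} ‖(M_r^{(1)} ⊗ ⋯ ⊗ M_r^{(n)})ψ‖² ≤ (n+1)·( η + ‖(Π^{(1)} ⊗ ⋯ ⊗ Π^{(n)})ψ‖² ). -/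
/-!
Write `Π = ⊗ᵢ Πᵢ` and telescope `1 - Π = ∑ᵢ Qᵢ`, where `Qᵢ` has the factors `1` before site `i`,
`1 - Πᵢ` at site `i` and `Πⱼ` after it; all of these are orthogonal projections. Splitting `ψ`
into these `n + 1` pieces costs the factor `n + 1` (Cauchy–Schwarz). On the piece `Πψ` each
`M_r` is a contraction, giving `‖Πψ‖²`. On `Qᵢψ` the operator `M_r` is bounded by its `i`-th
factor alone; averaging over `r` turns that factor into `Pᵢ`, and `(1 - Πᵢ) Pᵢ (1 - Πᵢ) ≤ η` by the
choice of `Πᵢ`, giving `η ‖Qᵢψ‖²`. Finally `∑ᵢ ‖Qᵢψ‖² = ‖(1 - Π)ψ‖² ≤ 1`.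
-/

open Finset Function Matrix
open scoped MatrixOrder ComplexOrder

theorem IsStarProjection.star_mul_mul_le {A : Type*} [Ring A] [PartialOrder A] [StarRing A]
    [StarOrderedRing A] {p q : A} (hp : IsStarProjection p) (hq : IsStarProjection q) :
    star (p * q) * (p * q) ≤ q := by
  calc star (p * q) * (p * q) = star q * p * q := by
        rw [star_mul, hp.isSelfAdjoint.star_eq, mul_assoc, ← mul_assoc p, hp.isIdempotentElem.eq,
          mul_assoc]
    _ ≤ star q * 1 * q := star_left_conjugate_le_conjugate hp.le_one q
    _ = q := by rw [mul_one, hq.isSelfAdjoint.star_eq, hq.isIdempotentElem.eq]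

theorem norm_add_sum_sq_le {E : Type*} [SeminormedAddCommGroup E] {ι : Type*} [Fintype ι]
    (a : E) (b : ι → E) :
    ‖a + ∑ i, b i‖ ^ 2 ≤ (Fintype.card ι + 1) * (‖a‖ ^ 2 + ∑ i, ‖b i‖ ^ 2) := by
  have h := sq_sum_le_card_mul_sum_sq (s := univ) (f := fun k : Option ι => k.elim ‖a‖ (‖b ·‖))
  simp only [Fintype.sum_option, card_univ, Fintype.card_option, Option.elim, Nat.cast_add,
    Nat.cast_one] at h
  refine le_trans ?_ h
  exact pow_le_pow_left₀ (norm_nonneg _)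
    ((norm_add_le _ _).trans (add_le_add_right (norm_sum_le _ _) _)) 2

namespace Matrix

section PiKron

variable {R : Type*} {ι : Type*} [Fintype ι] {X : ι → Type*}

variable (R X) in
/-- The Kronecker product `A₁ ⊗ ⋯ ⊗ Aₙ` of a family of square matrices. -/
noncomputable def piKron [CommSemiring R] :
    MultilinearMap R (fun i => Matrix (X i) (X i) R) (Matrix (∀ i, X i) (∀ i, X i) R) :=
  MultilinearMap.pi fun x => MultilinearMap.pi fun y =>
    (MultilinearMap.mkPiAlgebra R ι R).compLinearMap fun i => entryLinearMap R R (x i) (y i)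

theorem piKron_apply [CommSemiring R] (A : ∀ i, Matrix (X i) (X i) R) (x y : ∀ i, X i) :
    piKron R X A x y = ∏ i, A i (x i) (y i) := rfl

theorem piKron_mul [CommSemiring R] [DecidableEq ι] [∀ i, Fintype (X i)]
    (A B : ∀ i, Matrix (X i) (X i) R) :
    piKron R X (A * B) = piKron R X A * piKron R X B := by
  ext x y
  simp only [piKron_apply, Pi.mul_apply, mul_apply, prod_univ_sum, Fintype.piFinset_univ,
    prod_mul_distrib]

theorem piKron_one [CommSemiring R] [∀ i, DecidableEq (X i)] : piKron R X 1 = 1 := by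
  ext x y
  simp only [piKron_apply, Pi.one_apply, one_apply, prod_boole, mem_univ, true_implies,
    funext_iff]

theorem conjTranspose_piKron [CommSemiring R] [StarRing R] (A : ∀ i, Matrix (X i) (X i) R) :
    (piKron R X A)ᴴ = piKron R X (star A) := by
  ext x y
  simp [piKron_apply, star_prod]

theorem isStarProjection_piKron [CommSemiring R] [StarRing R] [DecidableEq ι]
    [∀ i, Fintype (X i)] {A : ∀ i, Matrix (X i) (X i) R} (hA : ∀ i, IsStarProjection (A i)) :
    IsStarProjection (piKron R X A) where
  isIdempotentElem := by
    rw [IsIdempotentElem, ← piKron_mul]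
    exact congrArg _ (funext fun i => (hA i).isIdempotentElem)
  isSelfAdjoint := by
    rw [IsSelfAdjoint, star_eq_conjTranspose, conjTranspose_piKron]
    exact congrArg _ (funext fun i => (hA i).isSelfAdjoint)

variable [DecidableEq ι] [∀ i, Fintype (X i)] [∀ i, DecidableEq (X i)]

variable (R X) in
/-- `B ↦ 1 ⊗ ⋯ ⊗ B ⊗ ⋯ ⊗ 1`, with `B` in position `i`. -/
noncomputable def siteEmbed [CommSemiring R] [StarRing R] (i : ι) :
    Matrix (X i) (X i) R →⋆ₐ[R] Matrix (∀ j, X j) (∀ j, X j) R where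
  toFun B := piKron R X (update 1 i B)
  map_one' := by rw [update_one, piKron_one]
  map_mul' B C := by rw [← piKron_mul, ← update_mul, one_mul]
  map_zero' := (piKron R X).map_update_zero 1 i
  map_add' := (piKron R X).map_update_add 1 i
  commutes' r := by
    simp only [Algebra.algebraMap_eq_smul_one, MultilinearMap.map_update_smul, update_one,
      piKron_one]
  map_star' B := by
    simp only [star_eq_conjTranspose, conjTranspose_piKron]
    rw [← update_star, star_one]
    rfl

theorem siteEmbed_apply [CommSemiring R] [StarRing R] (i : ι) (B : Matrix (X i) (X i) R) :
    siteEmbed R X i B = piKron R X (update 1 i B) := rfl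

theorem piKron_eq_mul_siteEmbed [CommSemiring R] [StarRing R] (A : ∀ j, Matrix (X j) (X j) R)
    (i : ι) : piKron R X A = piKron R X (update A i 1) * siteEmbed R X i (A i) := by
  rw [siteEmbed_apply, ← piKron_mul, ← update_mul, mul_one, one_mul, update_eq_self]

theorem siteEmbed_mul_piKron [CommSemiring R] [StarRing R] {A : ∀ j, Matrix (X j) (X j) R}
    {i : ι} (hA : IsIdempotentElem (A i)) :
    siteEmbed R X i (A i) * piKron R X A = piKron R X A := by
  rw [siteEmbed_apply, ← piKron_mul, ← update_eq_self i A, ← update_mul, one_mul, update_self,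
    hA.eq]

end PiKron

section Telescope

variable {R : Type*} [CommRing R] {ι : Type*} [LinearOrder ι] {X : ι → Type*}
  [∀ j, DecidableEq (X j)]

def telescopeFamily (E : ∀ j, Matrix (X j) (X j) R) (i : ι) : ∀ j, Matrix (X j) (X j) R :=
  fun j => if j < i then 1 else if i = j then 1 - E j else E j

theorem piKron_add_sum_telescopeFamily [Fintype ι] (E : ∀ j, Matrix (X j) (X j) R) :
    piKron R X E + ∑ i, piKron R X (telescopeFamily E i) = 1 := by
  have h := (piKron R X).map_sub_map_piecewise 1 E univ
  simp only [piecewise_univ, mem_univ, true_implies, Pi.one_apply, piKron_one] at h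
  exact add_eq_of_eq_sub' h.symm

theorem isStarProjection_telescopeFamily [StarRing R] [∀ j, Fintype (X j)]
    {E : ∀ j, Matrix (X j) (X j) R} (hE : ∀ j, IsStarProjection (E j)) (i j : ι) :
    IsStarProjection (telescopeFamily E i j) := by
  unfold telescopeFamily
  split_ifs
  exacts [.one _, (hE j).one_sub, hE j]

end Telescope

section Expectation

variable {n : Type*} [Fintype n]

noncomputable def expectation (v : n → ℂ) : Matrix n n ℂ →ₗ[ℝ] ℝ where
  toFun A := (star v ⬝ᵥ A *ᵥ v).re
  map_add' A B := by simp [add_mulVec, dotProduct_add]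
  map_smul' c A := by simp [smul_mulVec, dotProduct_smul]

theorem expectation_apply (v : n → ℂ) (A : Matrix n n ℂ) :
    expectation v A = (star v ⬝ᵥ A *ᵥ v).re := rfl

theorem expectation_mono (v : n → ℂ) {A B : Matrix n n ℂ} (h : A ≤ B) :
    expectation v A ≤ expectation v B := by
  rw [← sub_nonneg, ← map_sub]
  exact (le_iff.mp h).re_dotProduct_nonneg v

theorem sum_normSq_mulVec (A : Matrix n n ℂ) (v : n → ℂ) :
    ∑ x, Complex.normSq ((A *ᵥ v) x) = expectation v (star A * A) := by
  rw [expectation_apply, ← mulVec_mulVec, dotProduct_mulVec, star_eq_conjTranspose, ← star_mulVec,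
    dotProduct, Complex.re_sum]
  simp [Complex.normSq_apply, Complex.mul_re]

theorem expectation_star_mul_add_sum_le {ι : Type*} [Fintype ι] (v : n → ℂ) (A : Matrix n n ℂ)
    (B : ι → Matrix n n ℂ) :
    expectation v (star (A + ∑ i, B i) * (A + ∑ i, B i)) ≤
      (Fintype.card ι + 1) * (expectation v (star A * A) + ∑ i, expectation v (star (B i) * B i)) := by
  simp only [← sum_normSq_mulVec, add_mulVec, sum_mulVec]
  calc _ ≤ ∑ x, (Fintype.card ι + 1) *
        (Complex.normSq ((A *ᵥ v) x) + ∑ i, Complex.normSq ((B i *ᵥ v) x)) :=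
        sum_le_sum fun x _ => by
          simpa [Complex.normSq_eq_norm_sq, Finset.sum_apply] using
            norm_add_sum_sq_le ((A *ᵥ v) x) (fun i => (B i *ᵥ v) x)
    _ = _ := by rw [← mul_sum, sum_add_distrib, sum_comm]

end Expectation

section Spectral

variable {Y : Type*} [Fintype Y] [DecidableEq Y] {U : Matrix Y Y ℂ}

theorem isStarProjection_conj_diagonal_indicator (hU : U ∈ unitaryGroup Y ℂ) (μ : Y → ℝ)
    (η : ℝ) : IsStarProjection (U * diagonal (fun a => if η < μ a then (1 : ℂ) else 0) * Uᴴ) := by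
  have hD : IsStarProjection (diagonal (fun a => if η < μ a then (1 : ℂ) else 0)) := by
    constructor
    · rw [IsIdempotentElem, diagonal_mul_diagonal]
      congr 1; ext a; by_cases h : η < μ a <;> simp [h]
    · rw [IsSelfAdjoint, star_eq_conjTranspose, diagonal_conjTranspose]
      congr 1; ext a; by_cases h : η < μ a <;> simp [h]
  exact hD.map (Unitary.conjStarAlgAut ℂ _ ⟨U, hU⟩)

theorem conj_diagonal_cut_le (hU : U ∈ unitaryGroup Y ℂ) (μ : Y → ℝ) {η : ℝ} (hη : 0 ≤ η) :
    (1 - U * diagonal (fun a => if η < μ a then (1 : ℂ) else 0) * Uᴴ) *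
        (U * diagonal (fun a => (μ a : ℂ)) * Uᴴ) *
        (1 - U * diagonal (fun a => if η < μ a then (1 : ℂ) else 0) * Uᴴ) ≤ η • 1 := by
  set φ := Unitary.conjStarAlgAut ℂ (Matrix Y Y ℂ) ⟨U, hU⟩
  have hcut : (1 - diagonal (fun a => if η < μ a then (1 : ℂ) else 0)) *
      diagonal (fun a => (μ a : ℂ)) * (1 - diagonal (fun a => if η < μ a then (1 : ℂ) else 0)) ≤
      η • 1 := by
    rw [le_iff, ← diagonal_one, diagonal_sub, diagonal_mul_diagonal, diagonal_mul_diagonal,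
      ← diagonal_smul, diagonal_sub, posSemidef_diagonal_iff]
    intro a
    split_ifs with h
    · simpa using hη
    · simpa [← Complex.ofReal_sub, Complex.zero_le_real] using not_lt.mp h
  have h := OrderHomClass.mono φ hcut
  rw [← Complex.coe_smul, map_smul, map_one, Complex.coe_smul] at h
  simp only [map_mul, map_sub, map_one] at h
  exact h

end Spectral

section TensorBound

variable {ι : Type*} [Fintype ι] {X : ι → Type*} [∀ i, Fintype (X i)] [∀ i, DecidableEq (X i)]
  {κ : Type*} [Fintype κ]

theorem sum_star_mul_piKron_le [DecidableEq ι] (i : ι) {M : κ → ∀ j, Matrix (X j) (X j) ℂ}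
    (hM : ∀ r j, IsStarProjection (M r j)) {Q : ∀ j, Matrix (X j) (X j) ℂ}
    (hQ : ∀ j, IsStarProjection (Q j)) {P : Matrix (X i) (X i) ℂ}
    (hP : ∑ r, M r i = Fintype.card κ • P) {η : ℝ} (hPQ : Q i * P * Q i ≤ η • 1) :
    ∑ r, star (piKron ℂ X (M r) * piKron ℂ X Q) * (piKron ℂ X (M r) * piKron ℂ X Q) ≤
      Fintype.card κ • η • piKron ℂ X Q := by
  set q := piKron ℂ X Q
  set S := siteEmbed ℂ X i
  have hq : IsStarProjection q := isStarProjection_piKron hQ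
  have hSq : S (Q i) * q = q := siteEmbed_mul_piKron (hQ i).isIdempotentElem
  have hqS : q * S (Q i) = q := by
    simpa [star_mul, hq.isSelfAdjoint.star_eq, ← map_star, (hQ i).isSelfAdjoint.star_eq]
      using congrArg star hSq
  -- `M r` factors as its `i`-th site times the (contractive) remaining sites.
  have hMq : ∀ r, star (piKron ℂ X (M r) * q) * (piKron ℂ X (M r) * q) ≤
      star q * S (M r i) * q := by
    intro r
    have hC : IsStarProjection (piKron ℂ X (update (M r) i 1)) := by
      refine isStarProjection_piKron fun j => ?_
      rcases eq_or_ne j i with rfl | hj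
      · simp [IsStarProjection.one]
      · simpa [hj] using hM r j
    have h := star_left_conjugate_le_conjugate (hC.star_mul_mul_le ((hM r i).map S)) q
    rw [← piKron_eq_mul_siteEmbed] at h
    simpa only [star_mul, mul_assoc] using h
  calc _ ≤ ∑ r, star q * S (M r i) * q := sum_le_sum fun r _ => hMq r
    _ = Fintype.card κ • (star q * S (Q i * P * Q i) * q) := by
      rw [← sum_mul, ← mul_sum, ← map_sum, hP, map_nsmul, mul_smul_comm, smul_mul_assoc,
        map_mul, map_mul, hq.isSelfAdjoint.star_eq, ← mul_assoc, ← mul_assoc, hqS, mul_assoc,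
        mul_assoc, hSq, mul_assoc]
    _ ≤ Fintype.card κ • (star q * S (η • 1) * q) :=
      nsmul_le_nsmul_right (star_left_conjugate_le_conjugate (OrderHomClass.mono S hPQ) q) _
    _ = Fintype.card κ • η • q := by
      rw [← Complex.coe_smul, map_smul, map_one, Complex.coe_smul, mul_smul_comm, mul_one,
        smul_mul_assoc, hq.isSelfAdjoint.star_eq, hq.isIdempotentElem.eq]

theorem sum_expectation_piKron_telescopeFamily_le [LinearOrder ι] (v : (∀ i, X i) → ℂ)
    {E : ∀ i, Matrix (X i) (X i) ℂ} (hE : ∀ i, IsStarProjection (E i)) :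
    ∑ i, expectation v (piKron ℂ X (telescopeFamily E i)) ≤ expectation v 1 := by
  have h := expectation_mono v (sub_le_self 1 (isStarProjection_piKron hE).nonneg)
  rwa [← piKron_add_sum_telescopeFamily E, add_sub_cancel_left, map_sum,
    piKron_add_sum_telescopeFamily] at h

theorem sum_expectation_piKron_le [LinearOrder ι] (v : (∀ i, X i) → ℂ)
    {M : κ → ∀ i, Matrix (X i) (X i) ℂ} (hM : ∀ r i, IsStarProjection (M r i))
    {P E : ∀ i, Matrix (X i) (X i) ℂ} (hP : ∀ i, ∑ r, M r i = Fintype.card κ • P i)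
    (hE : ∀ i, IsStarProjection (E i)) {η : ℝ} (hη : 0 ≤ η)
    (hcut : ∀ i, (1 - E i) * P i * (1 - E i) ≤ η • 1) :
    ∑ r, expectation v (star (piKron ℂ X (M r)) * piKron ℂ X (M r)) ≤
      (Fintype.card ι + 1) * (Fintype.card κ * expectation v (piKron ℂ X E) +
        Fintype.card κ * η * expectation v 1) := by
  set T := fun r => piKron ℂ X (M r)
  set Q := fun i => piKron ℂ X (telescopeFamily E i)
  set ω := expectation v
  have hsplit : ∀ r, ω (star (T r) * T r) ≤ (Fintype.card ι + 1) *
      (ω (star (T r * piKron ℂ X E) * (T r * piKron ℂ X E)) +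
        ∑ i, ω (star (T r * Q i) * (T r * Q i))) := by
    intro r
    have h := expectation_star_mul_add_sum_le v (T r * piKron ℂ X E) fun i => T r * Q i
    rwa [← mul_sum, ← mul_add, piKron_add_sum_telescopeFamily, mul_one] at h
  have hQ : ∀ i, ∑ r, ω (star (T r * Q i) * (T r * Q i)) ≤ Fintype.card κ * η * ω (Q i) := by
    intro i
    have h := expectation_mono v <| sum_star_mul_piKron_le i hM
      (isStarProjection_telescopeFamily hE i) (hP i) (by simpa [telescopeFamily] using hcut i)
    rwa [map_sum, map_nsmul, map_smul, smul_eq_mul, nsmul_eq_mul, ← mul_assoc] at h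
  calc _ ≤ ∑ r, (Fintype.card ι + 1) * (ω (star (T r * piKron ℂ X E) * (T r * piKron ℂ X E)) +
        ∑ i, ω (star (T r * Q i) * (T r * Q i))) := sum_le_sum fun r _ => hsplit r
    _ = (Fintype.card ι + 1) * (∑ r, ω (star (T r * piKron ℂ X E) * (T r * piKron ℂ X E)) +
        ∑ i, ∑ r, ω (star (T r * Q i) * (T r * Q i))) := by
      rw [← mul_sum, sum_add_distrib, sum_comm (s := univ (α := κ))]
    _ ≤ (Fintype.card ι + 1) * (∑ _r : κ, ω (piKron ℂ X E) +
        ∑ i, Fintype.card κ * η * ω (Q i)) := by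
      gcongr with r _ i _
      exacts [expectation_mono v ((isStarProjection_piKron (hM r)).star_mul_mul_le
        (isStarProjection_piKron hE)), hQ i]
    _ ≤ _ := by
      rw [sum_const, card_univ, nsmul_eq_mul, ← mul_sum]
      gcongr (_ + 1) * (_ + ?_)
      exact mul_le_mul_of_nonneg_left (sum_expectation_piKron_telescopeFamily_le v hE)
        (by positivity)

end TensorBound

end Matrix

theorem stmt8_general {n : ℕ} (X : Fin n → Type)
    [∀ i, Fintype (X i)] [∀ i, DecidableEq (X i)]
    {R : Type} [Fintype R] [Nonempty R]
    (M : R → (i : Fin n) → Matrix (X i) (X i) ℂ)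
    (hMherm : ∀ r i, (M r i).IsHermitian)
    (hMidem : ∀ r i, M r i * M r i = M r i)
    (Pm : (i : Fin n) → Matrix (X i) (X i) ℂ)
    (hPm : ∀ i, Pm i = ((Fintype.card R : ℂ))⁻¹ • ∑ r : R, M r i)
    (η : ℝ) (hη0 : 0 ≤ η)
    (Pj : (i : Fin n) → Matrix (X i) (X i) ℂ)
    (hPj : ∀ i, ∃ (U : Matrix (X i) (X i) ℂ) (μ : X i → ℝ),
      U ∈ Matrix.unitaryGroup (X i) ℂ ∧
      Pm i = U * Matrix.diagonal (fun a => (μ a : ℂ)) * U.conjTranspose ∧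
      Pj i = U * Matrix.diagonal (fun a => if η < μ a then (1 : ℂ) else 0) * U.conjTranspose)
    (tens : ((i : Fin n) → Matrix (X i) (X i) ℂ) →
      (((i : Fin n) → X i) → ℂ) → (((i : Fin n) → X i) → ℂ))
    (htens : ∀ A v xx, tens A v xx =
      ∑ yy : (i : Fin n) → X i, (∏ i, A i (xx i) (yy i)) * v yy)
    (ψ : ((i : Fin n) → X i) → ℂ)
    (hψ : ∑ xx, Complex.normSq (ψ xx) = 1) :
    (∑ r : R, ∑ xx, Complex.normSq (tens (M r) ψ xx)) / (Fintype.card R : ℝ)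
      ≤ ((n : ℝ) + 1) * (η + ∑ xx, Complex.normSq (tens Pj ψ xx)) := by
  have hspec : ∀ i, IsStarProjection (Pj i) ∧ (1 - Pj i) * Pm i * (1 - Pj i) ≤ η • 1 := by
    intro i
    obtain ⟨U, μ, hU, hPmU, hPjU⟩ := hPj i
    rw [hPmU, hPjU]
    exact ⟨isStarProjection_conj_diagonal_indicator hU μ η, conj_diagonal_cut_le hU μ hη0⟩
  have hsum : ∀ i, ∑ r, M r i = Fintype.card R • Pm i := fun i => by
    rw [hPm, ← Nat.cast_smul_eq_nsmul ℂ, smul_smul, mul_inv_cancel₀ (by simp), one_smul]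
  have h := sum_expectation_piKron_le ψ (fun r i => ⟨hMidem r i, hMherm r i⟩) hsum
    (fun i => (hspec i).1) hη0 (fun i => (hspec i).2)
  have hPjT := isStarProjection_piKron (R := ℂ) (X := X) fun i => (hspec i).1
  have hψ1 : expectation ψ 1 = 1 := by simpa [hψ] using (sum_normSq_mulVec 1 ψ).symm
  have hmulVec : ∀ A, tens A ψ = piKron ℂ X A *ᵥ ψ := fun A => funext (htens A ψ)
  simp only [hmulVec, sum_normSq_mulVec, hPjT.isSelfAdjoint.star_eq, hPjT.isIdempotentElem.eq]
  rw [hψ1, Fintype.card_fin, mul_one] at h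
  rw [div_le_iff₀ (by positivity)]
  linarith

/-- Let `M_r^{(i)}` be orthogonal projections, `P^{(i)} = (1/|R|)Σ_r M_r^{(i)}`,
`η ∈ [0,1]`, and `Π^{(i)}` the orthogonal projection onto the sum of eigenspaces of `P^{(i)}`
with eigenvalues strictly greater than `η`. Then for every unit vector `ψ`:
`(1/|R|)·Σ_r ‖(M_r^{(1)} ⊗ ⋯ ⊗ M_r^{(n)})ψ‖² ≤ (n+1)·(η + ‖(Π^{(1)} ⊗ ⋯ ⊗ Π^{(n)})ψ‖²)`. -/
theorem stmt8 {n : ℕ} (hn : 1 ≤ n) (X : Fin n → Type)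
    [∀ i, Fintype (X i)] [∀ i, DecidableEq (X i)] [∀ i, Nonempty (X i)]
    {R : Type} [Fintype R] [Nonempty R]
    (M : R → (i : Fin n) → Matrix (X i) (X i) ℂ)
    (hMherm : ∀ r i, (M r i).IsHermitian)
    (hMidem : ∀ r i, M r i * M r i = M r i)
    (Pm : (i : Fin n) → Matrix (X i) (X i) ℂ)
    (hPm : ∀ i, Pm i = ((Fintype.card R : ℂ))⁻¹ • ∑ r : R, M r i)
    (η : ℝ) (hη0 : 0 ≤ η) (hη1 : η ≤ 1)
    (Pj : (i : Fin n) → Matrix (X i) (X i) ℂ)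
    (hPj : ∀ i, ∃ (U : Matrix (X i) (X i) ℂ) (μ : X i → ℝ),
      U ∈ Matrix.unitaryGroup (X i) ℂ ∧
      Pm i = U * Matrix.diagonal (fun a => (μ a : ℂ)) * U.conjTranspose ∧
      Pj i = U * Matrix.diagonal (fun a => if η < μ a then (1 : ℂ) else 0) * U.conjTranspose)
    (tens : ((i : Fin n) → Matrix (X i) (X i) ℂ) →
      (((i : Fin n) → X i) → ℂ) → (((i : Fin n) → X i) → ℂ))
    (htens : ∀ A v xx, tens A v xx =
      ∑ yy : (i : Fin n) → X i, (∏ i, A i (xx i) (yy i)) * v yy)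
    (ψ : ((i : Fin n) → X i) → ℂ)
    (hψ : ∑ xx, Complex.normSq (ψ xx) = 1) :
    (∑ r : R, ∑ xx, Complex.normSq (tens (M r) ψ xx)) / (Fintype.card R : ℝ)
      ≤ ((n : ℝ) + 1) * (η + ∑ xx, Complex.normSq (tens Pj ψ xx)) :=
  stmt8_general X M hMherm hMidem Pm hPm η hη0 Pj hPj tens htens ψ hψ
end
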